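/- Let g(y) = (y/2)√((2y−1)(3−2y)) for y ∈ [1/2, 3/2] and let y* = (3+√3)/4. Then g is strictly increasing on [1/2, y*] and strictly decreasing on [y*, 3/2], and there is a unique function β : (1/2, y*) → (y*, 3/2) such that g(β(u)) = g(u) for all u ∈ (1/2, y*); moreover lim_{u → y*⁻} (β(u) − y*)/(u − y*) = −1. -/

import Mathlib

open Set Real Filter

/-- g(y) = (y/2)·√((2y−1)(3−2y)) of Example 6. -/
noncomputable def gEx6 (y : ℝ) : ℝ := y / 2 * Real.sqrt ((2 * y - 1) * (3 - 2 * y))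

/-- y* = (3+√3)/4. -/
noncomputable def ystar : ℝ := (3 + Real.sqrt 3) / 4

/-!
`g²` is the quartic `gSq y = (y/2)²(2y-1)(3-2y)`, with derivative `-4y(y - (3-√3)/4)(y - y*)`,
which gives the monotonicity on both sides of `y*`; the intermediate value theorem on
`[y*, 3/2]` produces the reflection `β`, unique since `g` is injective there.
Around its maximum, `gSq y* - gSq y = (y - y*)² q(y)` with `q = gSqQuot ≥ √3/8` on `[0, ∞)`, so
`g(β u) = g(u)` reads `(β u - y*)² q(β u) = (u - y*)² q(u)`. Hence `β u → y*`, and the ratio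
`(β u - y*)/(u - y*)`, being negative, equals `-√(q u / q (β u)) → -1`.
-/

open Topology

theorem tendsto_of_sq_mul_eq {l : Filter ℝ} {q β : ℝ → ℝ} {y₀ m : ℝ} (hl : l ≤ 𝓝 y₀)
    (hq : ContinuousAt q y₀) (hm : 0 < m) (hqβ : ∀ᶠ u in l, m ≤ q (β u))
    (hβ : ∀ᶠ u in l, (β u - y₀) ^ 2 * q (β u) = (u - y₀) ^ 2 * q u) :
    Tendsto β l (𝓝 y₀) := by
  have hbound : Tendsto (fun u => √((u - y₀) ^ 2 * q u / m)) l (𝓝 0) := by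
    have h : ContinuousAt (fun u => √((u - y₀) ^ 2 * q u / m)) y₀ := by fun_prop
    simpa using h.tendsto.mono_left hl
  rw [tendsto_iff_norm_sub_tendsto_zero]
  refine squeeze_zero' (.of_forall fun _ => norm_nonneg _) ?_ hbound
  filter_upwards [hqβ, hβ] with u hmq hu
  refine Real.abs_le_sqrt ((le_div_iff₀ hm).2 ?_)
  rw [← hu]
  exact mul_le_mul_of_nonneg_left hmq (sq_nonneg _)

theorem tendsto_div_sub_of_sq_mul_eq {q β : ℝ → ℝ} {y₀ : ℝ} (hq : ContinuousAt q y₀)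
    (hq₀ : 0 < q y₀) (hβ : Tendsto β (𝓝[<] y₀) (𝓝 y₀)) (hβ_gt : ∀ᶠ u in 𝓝[<] y₀, y₀ < β u)
    (hβ_eq : ∀ᶠ u in 𝓝[<] y₀, (β u - y₀) ^ 2 * q (β u) = (u - y₀) ^ 2 * q u) :
    Tendsto (fun u => (β u - y₀) / (u - y₀)) (𝓝[<] y₀) (𝓝 (-1)) := by
  have hqu : Tendsto q (𝓝[<] y₀) (𝓝 (q y₀)) := hq.tendsto.mono_left nhdsWithin_le_nhds
  have hqβ : Tendsto (fun u => q (β u)) (𝓝[<] y₀) (𝓝 (q y₀)) := hq.tendsto.comp hβ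
  have hlim : Tendsto (fun u => -√(q u / q (β u))) (𝓝[<] y₀) (𝓝 (-1)) := by
    simpa [hq₀.ne'] using ((hqu.div hqβ hq₀.ne').sqrt).neg
  refine hlim.congr' ?_
  filter_upwards [self_mem_nhdsWithin, hβ_gt, hβ_eq, hqu.eventually_const_lt hq₀,
    hqβ.eventually_const_lt hq₀] with u (hu : u < y₀) hgt heq hqu_pos hqβ_pos
  have hneg : (β u - y₀) / (u - y₀) < 0 := div_neg_of_pos_of_neg (by linarith) (by linarith)
  have hsq : q u / q (β u) = ((β u - y₀) / (u - y₀)) ^ 2 := by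
    rw [div_pow, div_eq_div_iff hqβ_pos.ne' (pow_ne_zero 2 (sub_ne_zero.2 hu.ne)), heq, mul_comm]
  rw [hsq, Real.sqrt_sq_eq_abs, abs_of_neg hneg, neg_neg]

lemma one_lt_sqrt_three : 1 < √3 := by
  simpa using Real.sqrt_lt_sqrt zero_le_one (by norm_num : (1 : ℝ) < 3)

lemma sqrt_three_lt_two : √3 < 2 := by
  rw [Real.sqrt_lt' two_pos]; norm_num

lemma half_lt_ystar : 1 / 2 < ystar := by unfold ystar; linarith [one_lt_sqrt_three]

lemma ystar_lt_three_halves : ystar < 3 / 2 := by unfold ystar; linarith [sqrt_three_lt_two]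

noncomputable def gSq (y : ℝ) : ℝ := (y / 2) ^ 2 * ((2 * y - 1) * (3 - 2 * y))

lemma gEx6_eq_sqrt_gSq {y : ℝ} (hy : 0 ≤ y) : gEx6 y = √(gSq y) := by
  rw [gEx6, gSq, Real.sqrt_mul (sq_nonneg _), Real.sqrt_sq (by linarith)]

lemma gSq_nonneg {y : ℝ} (hy : y ∈ Icc (1 / 2 : ℝ) (3 / 2)) : 0 ≤ gSq y :=
  mul_nonneg (sq_nonneg _) (mul_nonneg (by linarith [hy.1]) (by linarith [hy.2]))

lemma hasDerivAt_gSq (y : ℝ) :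
    HasDerivAt gSq (-4 * y * (y - (3 - √3) / 4) * (y - ystar)) y := by
  have h := (((hasDerivAt_id' y).div_const 2).pow 2).mul
    ((((hasDerivAt_id' y).const_mul 2).sub_const 1).mul (((hasDerivAt_id' y).const_mul 2).const_sub 3))
  refine h.congr_deriv ?_
  simp only [Pi.mul_apply, Pi.pow_apply, ystar]
  linear_combination -(y / 4) * Real.sq_sqrt (show (0 : ℝ) ≤ 3 by norm_num)

lemma continuous_gSq : Continuous gSq :=
  continuous_iff_continuousAt.2 fun y => (hasDerivAt_gSq y).continuousAt

lemma strictMonoOn_gSq : StrictMonoOn gSq (Icc (1 / 2) ystar) := by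
  refine strictMonoOn_of_deriv_pos (convex_Icc _ _) continuous_gSq.continuousOn fun x hx => ?_
  rw [interior_Icc] at hx
  rw [(hasDerivAt_gSq x).deriv]
  have hx₀ : 0 < x := by linarith [hx.1]
  have hx₁ : 0 < x - (3 - √3) / 4 := by linarith [hx.1, one_lt_sqrt_three]
  nlinarith [mul_pos (mul_pos hx₀ hx₁) (sub_pos.2 hx.2)]

lemma strictAntiOn_gSq : StrictAntiOn gSq (Icc ystar (3 / 2)) := by
  refine strictAntiOn_of_deriv_neg (convex_Icc _ _) continuous_gSq.continuousOn fun x hx => ?_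
  rw [interior_Icc] at hx
  rw [(hasDerivAt_gSq x).deriv]
  have hx₀ : 0 < x := by linarith [hx.1, half_lt_ystar]
  have hx₁ : 0 < x - (3 - √3) / 4 := by linarith [hx.1, half_lt_ystar, one_lt_sqrt_three]
  nlinarith [mul_pos (mul_pos hx₀ hx₁) (sub_pos.2 hx.1)]

lemma strictMonoOn_gEx6 : StrictMonoOn gEx6 (Icc (1 / 2) ystar) := by
  refine (Real.strictMonoOn_sqrt.comp strictMonoOn_gSq fun y hy =>
    gSq_nonneg ⟨hy.1, hy.2.trans ystar_lt_three_halves.le⟩).congr fun y hy => ?_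
  exact (gEx6_eq_sqrt_gSq (by linarith [hy.1])).symm

lemma strictAntiOn_gEx6 : StrictAntiOn gEx6 (Icc ystar (3 / 2)) := by
  refine (Real.strictMonoOn_sqrt.comp_strictAntiOn strictAntiOn_gSq fun y hy =>
    gSq_nonneg ⟨half_lt_ystar.le.trans hy.1, hy.2⟩).congr fun y hy => ?_
  exact (gEx6_eq_sqrt_gSq (by linarith [hy.1, half_lt_ystar])).symm

lemma continuous_gEx6 : Continuous gEx6 := by
  unfold gEx6; fun_prop

lemma exists_gEx6_eq {u : ℝ} (hu : u ∈ Ioo (1 / 2 : ℝ) ystar) :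
    ∃ v ∈ Ioo ystar (3 / 2), gEx6 v = gEx6 u := by
  have hend : gEx6 (3 / 2) = gEx6 (1 / 2) := by norm_num [gEx6]
  have hlt : gEx6 (3 / 2) < gEx6 u := hend ▸
    strictMonoOn_gEx6 (left_mem_Icc.2 half_lt_ystar.le) (Ioo_subset_Icc_self hu) hu.1
  have hgt : gEx6 u < gEx6 ystar :=
    strictMonoOn_gEx6 (Ioo_subset_Icc_self hu) (right_mem_Icc.2 half_lt_ystar.le) hu.2
  exact intermediate_value_Ioo' ystar_lt_three_halves.le continuous_gEx6.continuousOn ⟨hlt, hgt⟩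

noncomputable def gSqQuot (y : ℝ) : ℝ := y ^ 2 + (√3 - 1) / 2 * y + √3 / 8

lemma gSq_ystar_sub (y : ℝ) : gSq ystar - gSq y = (y - ystar) ^ 2 * gSqQuot y := by
  have h2 : √3 ^ 2 = 3 := Real.sq_sqrt (by norm_num)
  have h3 : √3 ^ 3 = 3 * √3 := by rw [pow_succ, h2]
  have h4 : √3 ^ 4 = 9 := by rw [show 4 = 2 * 2 by rfl, pow_mul, h2]; norm_num
  unfold gSq gSqQuot ystar
  ring_nf
  rw [h2, h3, h4]
  ring

lemma continuous_gSqQuot : Continuous gSqQuot := by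
  unfold gSqQuot; fun_prop

lemma sqrt_three_div_eight_le_gSqQuot {y : ℝ} (hy : 0 ≤ y) : √3 / 8 ≤ gSqQuot y := by
  have : 0 ≤ (√3 - 1) / 2 * y := mul_nonneg (by linarith [one_lt_sqrt_three]) hy
  unfold gSqQuot
  linarith [sq_nonneg y]

lemma sq_mul_gSqQuot_eq_of_gEx6_eq {u v : ℝ} (hu : u ∈ Icc (1 / 2 : ℝ) (3 / 2))
    (hv : v ∈ Icc (1 / 2 : ℝ) (3 / 2)) (h : gEx6 v = gEx6 u) :
    (v - ystar) ^ 2 * gSqQuot v = (u - ystar) ^ 2 * gSqQuot u := by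
  rw [gEx6_eq_sqrt_gSq (by linarith [hv.1]), gEx6_eq_sqrt_gSq (by linarith [hu.1]),
    Real.sqrt_inj (gSq_nonneg hv) (gSq_nonneg hu)] at h
  linarith [gSq_ystar_sub u, gSq_ystar_sub v]

theorem stmt_16 :
    StrictMonoOn gEx6 (Icc (1/2) ystar) ∧
    StrictAntiOn gEx6 (Icc ystar (3/2)) ∧
    ∃ β : ℝ → ℝ,
      (∀ u ∈ Ioo (1/2 : ℝ) ystar, β u ∈ Ioo ystar (3/2) ∧ gEx6 (β u) = gEx6 u) ∧
      (∀ β' : ℝ → ℝ,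
        (∀ u ∈ Ioo (1/2 : ℝ) ystar, β' u ∈ Ioo ystar (3/2) ∧ gEx6 (β' u) = gEx6 u) →
        ∀ u ∈ Ioo (1/2 : ℝ) ystar, β' u = β u) ∧
      Tendsto (fun u => (β u - ystar) / (u - ystar))
        (nhdsWithin ystar (Iio ystar)) (nhds (-1)) := by
  refine ⟨strictMonoOn_gEx6, strictAntiOn_gEx6, ?_⟩
  choose! β hβ using fun u (hu : u ∈ Ioo (1 / 2 : ℝ) ystar) => exists_gEx6_eq hu
  refine ⟨β, hβ, fun β' hβ' u hu => ?_, ?_⟩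
  · exact strictAntiOn_gEx6.injOn (Ioo_subset_Icc_self (hβ' u hu).1)
      (Ioo_subset_Icc_self (hβ u hu).1) ((hβ' u hu).2.trans (hβ u hu).2.symm)
  have hnear : ∀ᶠ u in 𝓝[<] ystar, u ∈ Ioo (1 / 2) ystar := Ioo_mem_nhdsLT half_lt_ystar
  have hβ_gt : ∀ᶠ u in 𝓝[<] ystar, ystar < β u := hnear.mono fun u hu => (hβ u hu).1.1
  have hβ_eq : ∀ᶠ u in 𝓝[<] ystar,
      (β u - ystar) ^ 2 * gSqQuot (β u) = (u - ystar) ^ 2 * gSqQuot u :=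
    hnear.mono fun u hu => sq_mul_gSqQuot_eq_of_gEx6_eq
      ⟨hu.1.le, hu.2.le.trans ystar_lt_three_halves.le⟩
      ⟨half_lt_ystar.le.trans (hβ u hu).1.1.le, (hβ u hu).1.2.le⟩ (hβ u hu).2
  have hβ_lim : Tendsto β (𝓝[<] ystar) (𝓝 ystar) :=
    tendsto_of_sq_mul_eq nhdsWithin_le_nhds continuous_gSqQuot.continuousAt (by positivity)
      (hβ_gt.mono fun u hu => sqrt_three_div_eight_le_gSqQuot (by linarith [half_lt_ystar]))
      hβ_eq
  have hq_pos : 0 < gSqQuot ystar :=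
    (by positivity : (0 : ℝ) < √3 / 8).trans_le
      (sqrt_three_div_eight_le_gSqQuot (by linarith [half_lt_ystar]))
  exact tendsto_div_sub_of_sq_mul_eq continuous_gSqQuot.continuousAt hq_pos hβ_lim hβ_gt hβ_eq
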